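/- Assume σ∨ is pointed, let F = σ∨ ∩ n_ρ^⊥ be an affine facet of σ∨ whose corresponding extremal ray τ of σ∨ is affine, and let r be the primitive lattice vector on τ. Then the formula δ(χ^m) = ⟨m, n_ρ⟩·χ^{m−r} (for m ∈ P) defines a well-defined M-homogeneous locally nilpotent derivation of K[P], and χ^r ∈ K[P] is a slice for δ. -/

import Mathlib

set_option synthInstance.maxHeartbeats 1000000
set_option maxHeartbeats 1000000

noncomputable section

namespace ToricML

open Finsupp

/-- The Laurent polynomial algebra `K[M]`, where `M = ℤⁿ`. -/
abbrev Laurent (K : Type) [Field K] (n : ℕ) := AddMonoidAlgebra K (Fin n → ℤ)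

/-- The character `χ^m` in `K[M]`. -/
def chi (K : Type) [Field K] (n : ℕ) (m : Fin n → ℤ) : Laurent K n := AddMonoidAlgebra.single m 1

/-- The monoid algebra `K[P] = ⊕_{m ∈ P} K·χ^m` as a subalgebra of `K[M]`. -/
def monAlg (K : Type) [Field K] (n : ℕ) (P : AddSubmonoid (Fin n → ℤ)) :
    Subalgebra K (Laurent K n) where
  carrier := {f | ∀ m ∈ f.coeff.support, m ∈ P}
  mul_mem' := by
    classical
    intro a b ha hb m hm
    have h := AddMonoidAlgebra.support_coeff_mul_subset a b hm
    rw [Finset.mem_add] at h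
    obtain ⟨x, hx, y, hy, rfl⟩ := h
    exact P.add_mem (ha _ hx) (hb _ hy)
  add_mem' := by
    intro a b ha hb m hm
    rw [AddMonoidAlgebra.coeff_add] at hm
    rcases Finset.mem_union.mp (Finsupp.support_add hm) with h | h
    · exact ha _ h
    · exact hb _ h
  algebraMap_mem' := by
    intro c m hm
    simp only [AddMonoidAlgebra.coe_algebraMap, Function.comp_apply, AddMonoidAlgebra.coeff_single] at hm
    have := Finsupp.support_single_subset hm
    rw [Finset.mem_singleton] at this
    rw [this]
    exact P.zero_mem

lemma chi_mem (K : Type) [Field K] (n : ℕ) (P : AddSubmonoid (Fin n → ℤ))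
    {m : Fin n → ℤ} (hm : m ∈ P) : chi K n m ∈ monAlg K n P := by
  intro x hx
  have := Finsupp.support_single_subset hx
  rw [Finset.mem_singleton] at this
  rwa [this]

/-- The character `χ^m` as an element of `K[P]`. -/
def chiP (K : Type) [Field K] (n : ℕ) (P : AddSubmonoid (Fin n → ℤ))
    (m : Fin n → ℤ) (hm : m ∈ P) : monAlg K n P :=
  ⟨chi K n m, chi_mem K n P hm⟩

/-- A derivation is locally nilpotent if every element is killed by some power. -/
def IsLND {R A : Type*} [CommRing R] [CommRing A] [Algebra R A]
    (δ : Derivation R A A) : Prop :=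
  ∀ f : A, ∃ k : ℕ, (δ.toLinearMap ^ k) f = 0

/-- A slice of a derivation is an element mapped to `1`. -/
def HasSlice {R A : Type*} [CommRing R] [CommRing A] [Algebra R A]
    (δ : Derivation R A A) : Prop :=
  ∃ s : A, δ s = 1

/-- A derivation of `K[P]` is `M`-homogeneous of degree `e` if it maps `K·χ^m`
into `K·χ^{m+e}` for all `m ∈ P`. -/
def IsHomog (K : Type) [Field K] (n : ℕ) (P : AddSubmonoid (Fin n → ℤ))
    (δ : Derivation K (monAlg K n P) (monAlg K n P)) (e : Fin n → ℤ) : Prop :=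
  ∀ (m : Fin n → ℤ) (hm : m ∈ P), ∃ c : K,
    ((δ (chiP K n P m hm) : monAlg K n P) : Laurent K n) = AddMonoidAlgebra.single (m + e) c

/-- The Makar-Limanov invariant of `K[P]`: intersection of kernels of all LNDs. -/
def ML (K : Type) [Field K] (n : ℕ) (P : AddSubmonoid (Fin n → ℤ)) :
    Set (monAlg K n P) :=
  {f | ∀ δ : Derivation K (monAlg K n P) (monAlg K n P), IsLND δ → δ f = 0}

/-- The homogeneous Makar-Limanov invariant: intersection of kernels of all
`M`-homogeneous LNDs. -/
def MLh (K : Type) [Field K] (n : ℕ) (P : AddSubmonoid (Fin n → ℤ)) :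
    Set (monAlg K n P) :=
  {f | ∀ δ : Derivation K (monAlg K n P) (monAlg K n P),
    IsLND δ → (∃ e : Fin n → ℤ, IsHomog K n P δ e) → δ f = 0}

/-- The Makar-Limanov--Freudenburg invariant: intersection of kernels of all
LNDs admitting a slice. -/
def MLstar (K : Type) [Field K] (n : ℕ) (P : AddSubmonoid (Fin n → ℤ)) :
    Set (monAlg K n P) :=
  {f | ∀ δ : Derivation K (monAlg K n P) (monAlg K n P), IsLND δ → HasSlice δ → δ f = 0}

/-- Intersection of kernels of all homogeneous LNDs admitting a slice. -/
def MLstarh (K : Type) [Field K] (n : ℕ) (P : AddSubmonoid (Fin n → ℤ)) :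
    Set (monAlg K n P) :=
  {f | ∀ δ : Derivation K (monAlg K n P) (monAlg K n P),
    IsLND δ → HasSlice δ → (∃ e : Fin n → ℤ, IsHomog K n P δ e) → δ f = 0}

/-! ### Cones -/

/-- Embedding `ℤⁿ → ℚⁿ`. -/
def toQ (n : ℕ) (m : Fin n → ℤ) : Fin n → ℚ := fun i => (m i : ℚ)

lemma toQ_add (n : ℕ) (a b : Fin n → ℤ) : toQ n (a + b) = toQ n a + toQ n b := by
  funext i; simp [toQ]

lemma toQ_nsmul (n : ℕ) (k : ℕ) (a : Fin n → ℤ) : toQ n (k • a) = (k : ℚ) • toQ n a := by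
  funext i; simp [toQ]

lemma toQ_inj {n : ℕ} {a b : Fin n → ℤ} (h : toQ n a = toQ n b) : a = b := by
  funext i
  have := congrFun h i
  simp only [toQ] at this
  exact_mod_cast this

/-- The natural pairing between `ℚⁿ` and its dual. -/
def pairQ (n : ℕ) (w v : Fin n → ℚ) : ℚ := ∑ i, w i * v i

/-- The natural pairing between `M = ℤⁿ` and `N = ℤⁿ`. -/
def pairZ (n : ℕ) (w v : Fin n → ℤ) : ℤ := ∑ i, w i * v i

/-- The cone `σ∨ = ℚ_{≥0}·P ⊆ ℚⁿ` generated by `P`. -/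
def coneOf (n : ℕ) (P : AddSubmonoid (Fin n → ℤ)) : Set (Fin n → ℚ) :=
  {x | ∃ c : ℚ, 0 ≤ c ∧ ∃ p ∈ P, x = c • toQ n p}

/-- The dual cone of a subset of `ℚⁿ`. -/
def dualCone (n : ℕ) (s : Set (Fin n → ℚ)) : Set (Fin n → ℚ) :=
  {v | ∀ w ∈ s, 0 ≤ pairQ n w v}

/-- The cone `σ ⊆ ℚⁿ` dual to `σ∨`. -/
def sigma (n : ℕ) (P : AddSubmonoid (Fin n → ℤ)) : Set (Fin n → ℚ) :=
  dualCone n (coneOf n P)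

/-- The ray `ℚ_{≥0}·v`. -/
def rayOf (n : ℕ) (v : Fin n → ℚ) : Set (Fin n → ℚ) :=
  {x | ∃ c : ℚ, 0 ≤ c ∧ x = c • v}

/-- A cone is pointed if it contains no line. -/
def IsPointed (n : ℕ) (s : Set (Fin n → ℚ)) : Prop :=
  ∀ x ∈ s, -x ∈ s → x = 0

/-- `v` generates an extremal ray of the cone `s`. -/
def IsExtremalGen (n : ℕ) (s : Set (Fin n → ℚ)) (v : Fin n → ℚ) : Prop :=
  v ≠ 0 ∧ v ∈ s ∧ ∀ x ∈ s, ∀ y ∈ s, x + y ∈ rayOf n v → x ∈ rayOf n v ∧ y ∈ rayOf n v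

/-- A primitive lattice vector: the gcd of its coordinates is `1`. -/
def IsPrimitive (n : ℕ) (u : Fin n → ℤ) : Prop :=
  Finset.univ.gcd u = 1

/-- `u` is the primitive lattice generator of an extremal ray of `σ`. -/
def IsExtGenOfSigma (n : ℕ) (P : AddSubmonoid (Fin n → ℤ)) (u : Fin n → ℤ) : Prop :=
  IsPrimitive n u ∧ IsExtremalGen n (sigma n P) (toQ n u)

/-- `e` is a Demazure root associated to the extremal ray of `σ` with primitive
generator `u`. -/
def IsDemazureRoot (n : ℕ) (P : AddSubmonoid (Fin n → ℤ)) (u e : Fin n → ℤ) : Prop :=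
  IsExtGenOfSigma n P u ∧ pairZ n e u = -1 ∧
    ∀ u' : Fin n → ℤ, IsExtGenOfSigma n P u' → u' ≠ u → 0 ≤ pairZ n e u'

lemma mem_coneOf_int (n : ℕ) (P : AddSubmonoid (Fin n → ℤ)) (m : Fin n → ℤ) :
    toQ n m ∈ coneOf n P ↔ ∃ k : ℕ, 0 < k ∧ k • m ∈ P := by
  constructor
  · rintro ⟨c, hc, p, hp, heq⟩
    refine ⟨c.den, c.pos, ?_⟩
    have hnum : (0:ℤ) ≤ c.num := Rat.num_nonneg.mpr hc
    have key : c.den • m = c.num.toNat • p := by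
      apply toQ_inj
      rw [toQ_nsmul, toQ_nsmul, heq, smul_smul]
      congr 1
      have hden : (c.den : ℚ) ≠ 0 := Nat.cast_ne_zero.mpr c.den_nz
      have h2 : (c.num : ℚ) = c * c.den := (div_eq_iff hden).mp (Rat.num_div_den c)
      have h1 : ((c.num.toNat : ℕ) : ℚ) = (c.num : ℚ) := by
        exact_mod_cast Int.toNat_of_nonneg hnum
      rw [h1, h2]
      ring
    rw [key]
    exact AddSubmonoid.nsmul_mem P hp _
  · rintro ⟨k, hk, hkm⟩
    refine ⟨(k : ℚ)⁻¹, by positivity, k • m, hkm, ?_⟩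
    rw [toQ_nsmul, smul_smul]
    rw [inv_mul_cancel₀ (by exact_mod_cast hk.ne')]
    rw [one_smul]

/-- The saturation `P_sat = σ∨ ∩ M` of `P`. -/
def Psat (n : ℕ) (P : AddSubmonoid (Fin n → ℤ)) : AddSubmonoid (Fin n → ℤ) where
  carrier := {m | toQ n m ∈ coneOf n P}
  zero_mem' := by
    refine ⟨0, le_refl 0, 0, P.zero_mem, ?_⟩
    funext i; simp [toQ]
  add_mem' := by
    intro a b ha hb
    rw [Set.mem_setOf_eq, mem_coneOf_int] at ha hb ⊢
    obtain ⟨k, hk, hka⟩ := ha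
    obtain ⟨l, hl, hlb⟩ := hb
    refine ⟨k * l, Nat.mul_pos hk hl, ?_⟩
    have : (k * l) • (a + b) = l • (k • a) + k • (l • b) := by
      rw [smul_add, smul_smul, smul_smul, mul_comm l k]
    rw [this]
    exact P.add_mem (AddSubmonoid.nsmul_mem P hka l) (AddSubmonoid.nsmul_mem P hlb k)

lemma le_Psat (n : ℕ) (P : AddSubmonoid (Fin n → ℤ)) : P ≤ Psat n P := by
  intro m hm
  exact ⟨1, zero_le_one, m, hm, (one_smul _ _).symm⟩

lemma monAlg_mono (K : Type) [Field K] (n : ℕ) {P Q : AddSubmonoid (Fin n → ℤ)}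
    (h : P ≤ Q) : monAlg K n P ≤ monAlg K n Q :=
  fun _ hf m hm => h (hf m hm)

/-- `p` is a saturation point of `P`: `(p + σ∨) ∩ M ⊆ P`. -/
def IsSatPoint (n : ℕ) (P : AddSubmonoid (Fin n → ℤ)) (p : Fin n → ℤ) : Prop :=
  p ∈ P ∧ ∀ q ∈ Psat n P, p + q ∈ P

/-- The facet of `σ∨` corresponding to the extremal ray of `σ` with primitive
generator `u`: `σ∨ ∩ u^⊥`. -/
def facet (n : ℕ) (P : AddSubmonoid (Fin n → ℤ)) (u : Fin n → ℤ) : Set (Fin n → ℚ) :=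
  {x | x ∈ coneOf n P ∧ pairQ n x (toQ n u) = 0}

/-- The intersection of all facets of `σ∨` other than the one corresponding to `u`. -/
def facetInter (n : ℕ) (P : AddSubmonoid (Fin n → ℤ)) (u : Fin n → ℤ) :
    Set (Fin n → ℚ) :=
  ⋂ u' ∈ {u' : Fin n → ℤ | IsExtGenOfSigma n P u' ∧ u' ≠ u}, facet n P u'

/-- The facet of `σ∨` corresponding to `u` is affine: it is saturated
(`F ∩ M ⊆ P`) and the intersection of all other facets is one-dimensional. -/
def IsAffineFacet (n : ℕ) (P : AddSubmonoid (Fin n → ℤ)) (u : Fin n → ℤ) : Prop :=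
  IsExtGenOfSigma n P u ∧
  (∀ m : Fin n → ℤ, toQ n m ∈ facet n P u → m ∈ P) ∧
  (∃ v : Fin n → ℚ, v ≠ 0 ∧ facetInter n P u = rayOf n v)

/-- The extremal ray of `σ∨` with primitive vector `r`, corresponding to the
affine facet of `u`, is affine. -/
def IsAffineRay (n : ℕ) (P : AddSubmonoid (Fin n → ℤ)) (u r : Fin n → ℤ) : Prop :=
  IsPrimitive n r ∧ IsExtremalGen n (coneOf n P) (toQ n r) ∧
  toQ n r ∉ facet n P u ∧
  r ∈ P ∧ pairZ n r u = 1 ∧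
  ∀ h : Fin n → ℤ, toQ n h ∈ facet n P u → h ∉ P →
    ∀ k : ℕ, 0 < k → h + k • r ∉ P

/-- `r` is the primitive vector of an affine ray of `σ∨`. -/
def IsAffineRayAbs (n : ℕ) (P : AddSubmonoid (Fin n → ℤ)) (r : Fin n → ℤ) : Prop :=
  ∃ u : Fin n → ℤ, IsAffineFacet n P u ∧ IsAffineRay n P u r

/-- The intersection `τ₀` of all affine facets of `σ∨`. -/
def affInter (n : ℕ) (P : AddSubmonoid (Fin n → ℤ)) : Set (Fin n → ℚ) :=
  ⋂ u ∈ {u : Fin n → ℤ | IsAffineFacet n P u}, facet n P u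

lemma pairQ_add_left (n : ℕ) (x y v : Fin n → ℚ) :
    pairQ n (x + y) v = pairQ n x v + pairQ n y v := by
  simp [pairQ, add_mul, Finset.sum_add_distrib]

/-- `ML*_h(K[P])` as a subalgebra of `K[P]`. -/
def MLstarhAlg (K : Type) [Field K] (n : ℕ) (P : AddSubmonoid (Fin n → ℤ)) :
    Subalgebra K (monAlg K n P) where
  carrier := MLstarh K n P
  mul_mem' := by
    intro a b ha hb δ h1 h2 h3
    rw [Derivation.leibniz, ha δ h1 h2 h3, hb δ h1 h2 h3, smul_zero, smul_zero, add_zero]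
  add_mem' := by
    intro a b ha hb δ h1 h2 h3
    rw [map_add, ha δ h1 h2 h3, hb δ h1 h2 h3, add_zero]
  algebraMap_mem' := by
    intro c δ _ _ _
    exact Derivation.map_algebraMap δ c

/-- The submonoid `P ∩ τ₀`, where `τ₀` is the intersection of all affine facets. -/
def PtauZero (n : ℕ) (P : AddSubmonoid (Fin n → ℤ)) : AddSubmonoid (Fin n → ℤ) where
  carrier := {m | m ∈ P ∧ toQ n m ∈ affInter n P}
  zero_mem' := by
    refine ⟨P.zero_mem, ?_⟩
    simp only [affInter, Set.mem_iInter]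
    intro u hu
    refine ⟨⟨0, le_refl 0, 0, P.zero_mem, ?_⟩, ?_⟩
    · funext i; simp [toQ]
    · simp [pairQ, toQ]
  add_mem' := by
    rintro a b ⟨haP, ha⟩ ⟨hbP, hb⟩
    refine ⟨P.add_mem haP hbP, ?_⟩
    simp only [affInter, Set.mem_iInter] at ha hb ⊢
    intro u hu
    obtain ⟨-, ha2⟩ := ha u hu
    obtain ⟨-, hb2⟩ := hb u hu
    refine ⟨⟨1, zero_le_one, a + b, P.add_mem haP hbP, (one_smul _ _).symm⟩, ?_⟩
    rw [toQ_add, pairQ_add_left, ha2, hb2, add_zero]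

end ToricML


namespace ToricML

/-! ### Auxiliary pairing lemmas -/

lemma pairQ_smul_left (n : ℕ) (c : ℚ) (x y : Fin n → ℚ) :
    pairQ n (c • x) y = c * pairQ n x y := by
  simp [pairQ, Finset.mul_sum, mul_assoc]

lemma pairQ_sub_left (n : ℕ) (x y z : Fin n → ℚ) :
    pairQ n (x - y) z = pairQ n x z - pairQ n y z := by
  simp [pairQ, sub_mul, Finset.sum_sub_distrib]

lemma pairQ_zero_left (n : ℕ) (y : Fin n → ℚ) : pairQ n 0 y = 0 := by
  simp [pairQ]

lemma pairQ_comm (n : ℕ) (x y : Fin n → ℚ) : pairQ n x y = pairQ n y x := by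
  simp [pairQ, mul_comm]

lemma pairQ_add_right (n : ℕ) (x y z : Fin n → ℚ) :
    pairQ n x (y + z) = pairQ n x y + pairQ n x z := by
  rw [pairQ_comm, pairQ_add_left, pairQ_comm n y x, pairQ_comm n z x]

lemma pairQ_smul_right (n : ℕ) (c : ℚ) (x y : Fin n → ℚ) :
    pairQ n x (c • y) = c * pairQ n x y := by
  rw [pairQ_comm, pairQ_smul_left, pairQ_comm]

lemma pairQ_sub_right (n : ℕ) (x y z : Fin n → ℚ) :
    pairQ n x (y - z) = pairQ n x y - pairQ n x z := by
  rw [pairQ_comm, pairQ_sub_left, pairQ_comm n y x, pairQ_comm n z x]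

lemma pairQ_neg_right (n : ℕ) (x y : Fin n → ℚ) :
    pairQ n x (-y) = -pairQ n x y := by
  have : -y = (0 : Fin n → ℚ) - y := by simp
  rw [this, pairQ_sub_right, pairQ_comm n x 0, pairQ_zero_left, zero_sub]

lemma pairQ_neg_left (n : ℕ) (x y : Fin n → ℚ) :
    pairQ n (-x) y = -pairQ n x y := by
  rw [pairQ_comm, pairQ_neg_right, pairQ_comm]

lemma pairQ_sum_left {ι : Type*} (n : ℕ) (s : Finset ι) (f : ι → (Fin n → ℚ))
    (y : Fin n → ℚ) : pairQ n (∑ i ∈ s, f i) y = ∑ i ∈ s, pairQ n (f i) y := by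
  classical
  induction s using Finset.induction_on with
  | empty => simp [pairQ_zero_left]
  | insert _ _ h ih =>
    rw [Finset.sum_insert h, Finset.sum_insert h, pairQ_add_left, ih]

lemma pairQ_self_pos (n : ℕ) (x : Fin n → ℚ) (hx : x ≠ 0) : 0 < pairQ n x x := by
  have h1 : ∀ i, 0 ≤ x i * x i := fun i => mul_self_nonneg _
  obtain ⟨i, hi⟩ : ∃ i, x i ≠ 0 := by
    by_contra h; push_neg at h; exact hx (funext h)
  exact Finset.sum_pos' (fun i _ => h1 i)
    ⟨i, Finset.mem_univ i, mul_self_pos.mpr hi⟩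

lemma pairQ_toQ (n : ℕ) (a b : Fin n → ℤ) :
    pairQ n (toQ n a) (toQ n b) = ((pairZ n a b : ℤ) : ℚ) := by
  simp [pairQ, pairZ, toQ]

/-! ### Finitely generated cones and the Farkas lemma -/

/-- The cone generated by a finite family of vectors. -/
def coneFin (n s : ℕ) (p : Fin s → (Fin n → ℚ)) : Set (Fin n → ℚ) :=
  {x | ∃ c : Fin s → ℚ, (∀ i, 0 ≤ c i) ∧ x = ∑ i, c i • p i}

lemma farkas (n : ℕ) : ∀ (s : ℕ) (p : Fin s → (Fin n → ℚ)) (x : Fin n → ℚ),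
    x ∉ coneFin n s p →
    ∃ y : Fin n → ℚ, (∀ i, 0 ≤ pairQ n (p i) y) ∧ pairQ n x y < 0 := by
  intro s
  induction s with
  | zero =>
    intro p x hx
    have hx0 : x ≠ 0 := by
      rintro rfl
      exact hx ⟨fun i => 0, fun i => le_rfl, by simp⟩
    refine ⟨-x, fun i => i.elim0, ?_⟩
    rw [pairQ_neg_right]
    have := pairQ_self_pos n x hx0
    linarith
  | succ s ih =>
    intro p x hx
    set a := p 0 with ha
    set p' : Fin s → (Fin n → ℚ) := fun i => p i.succ with hp'
    have hxP' : x ∉ coneFin n s p' := by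
      rintro ⟨c, hc, rfl⟩
      refine hx ⟨Fin.cases 0 c, fun i => ?_, ?_⟩
      · induction i using Fin.cases with
        | zero => simp
        | succ j => simpa using hc j
      · rw [Fin.sum_univ_succ]
        simp [hp']
    obtain ⟨y, hy, hxy⟩ := ih p' x hxP'
    by_cases ht : 0 ≤ pairQ n a y
    · refine ⟨y, fun i => ?_, hxy⟩
      induction i using Fin.cases with
      | zero => exact ht
      | succ j => exact hy j
    · push_neg at ht
      have htne : pairQ n a y ≠ 0 := ne_of_lt ht
      set q : Fin s → (Fin n → ℚ) :=
        fun i => p' i - (pairQ n (p' i) y / pairQ n a y) • a with hqdef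
      set x' : Fin n → ℚ := x - (pairQ n x y / pairQ n a y) • a with hx'def
      have hx'q : x' ∉ coneFin n s q := by
        rintro ⟨c, hc, hcx⟩
        apply hx
        refine ⟨Fin.cases (pairQ n x y / pairQ n a y
          - ∑ i, c i * (pairQ n (p' i) y / pairQ n a y)) c, fun i => ?_, ?_⟩
        · induction i using Fin.cases with
          | zero =>
            simp only [Fin.cases_zero]
            have h1 : 0 < pairQ n x y / pairQ n a y := div_pos_of_neg_of_neg hxy ht
            have h2 : ∑ i, c i * (pairQ n (p' i) y / pairQ n a y) ≤ 0 := by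
              apply Finset.sum_nonpos
              intro i _
              have : pairQ n (p' i) y / pairQ n a y ≤ 0 := by
                rw [div_nonpos_iff]; exact Or.inl ⟨hy i, le_of_lt ht⟩
              exact mul_nonpos_of_nonneg_of_nonpos (hc i) this
            linarith
          | succ j => simpa using hc j
        · rw [Fin.sum_univ_succ]
          simp only [Fin.cases_zero, Fin.cases_succ]
          have hexp : ∑ i, c i • q i = (∑ i, c i • p' i)
              - (∑ i, c i * (pairQ n (p' i) y / pairQ n a y)) • a := by
            rw [Finset.sum_smul, ← Finset.sum_sub_distrib]
            refine Finset.sum_congr rfl fun i _ => ?_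
            simp only [hqdef, smul_sub, smul_smul]
          have hxfinal : x = (pairQ n x y / pairQ n a y
                - ∑ i, c i * (pairQ n (p' i) y / pairQ n a y)) • (p 0)
              + ∑ i, c i • p i.succ := by
            calc x = x' + (pairQ n x y / pairQ n a y) • a := by rw [hx'def]; abel
            _ = (∑ i, c i • q i) + (pairQ n x y / pairQ n a y) • a := by rw [hcx]
            _ = ((∑ i, c i • p' i)
                - (∑ i, c i * (pairQ n (p' i) y / pairQ n a y)) • a)
                + (pairQ n x y / pairQ n a y) • a := by rw [hexp]
            _ = (pairQ n x y / pairQ n a y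
                - ∑ i, c i * (pairQ n (p' i) y / pairQ n a y)) • a
                + ∑ i, c i • p' i := by rw [sub_smul]; abel
          exact hxfinal
      obtain ⟨z, hz, hx'z⟩ := ih q x' hx'q
      refine ⟨z - (pairQ n a z / pairQ n a y) • y, fun i => ?_, ?_⟩
      · induction i using Fin.cases with
        | zero =>
          rw [show p 0 = a from rfl, pairQ_sub_right, pairQ_smul_right,
            div_mul_cancel₀ _ htne]
          simp
        | succ j =>
          have hzj := hz j
          rw [hqdef] at hzj
          rw [pairQ_sub_left, pairQ_smul_left] at hzj
          rw [show p j.succ = p' j from rfl, pairQ_sub_right, pairQ_smul_right]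
          have hring : (pairQ n (p' j) y / pairQ n a y) * pairQ n a z
              = (pairQ n a z / pairQ n a y) * pairQ n (p' j) y := by ring
          linarith
      · rw [hx'def] at hx'z
        rw [pairQ_sub_left, pairQ_smul_left] at hx'z
        rw [pairQ_sub_right, pairQ_smul_right]
        have hring : (pairQ n x y / pairQ n a y) * pairQ n a z
            = (pairQ n a z / pairQ n a y) * pairQ n x y := by ring
        linarith

end ToricML

namespace ToricML

/-! ### Every element of a polyhedral dual cone pairs nonnegatively with a
functional that is nonnegative on all extremal rays. -/

def zset (n s : ℕ) (g : Fin s → (Fin n → ℚ)) (w : Fin n → ℚ) : Finset (Fin s) :=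
  Finset.univ.filter (fun i => pairQ n (g i) w = 0)

lemma mem_zset (n s : ℕ) (g : Fin s → (Fin n → ℚ)) (w : Fin n → ℚ) (i : Fin s) :
    i ∈ zset n s g w ↔ pairQ n (g i) w = 0 := by simp [zset]

lemma pairQ_zero_right (n : ℕ) (x : Fin n → ℚ) : pairQ n x 0 = 0 := by
  simp [pairQ]

lemma ext_lemma (n s : ℕ) (g : Fin s → (Fin n → ℚ))
    (hpt' : ∀ y : Fin n → ℚ, (∀ i, 0 ≤ pairQ n (g i) y) →
      (∀ i, 0 ≤ pairQ n (g i) (-y)) → y = 0)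
    (z : Fin n → ℚ)
    (hz : ∀ w, IsExtremalGen n {y | ∀ i, 0 ≤ pairQ n (g i) y} w → 0 ≤ pairQ n z w) :
    ∀ y, (∀ i, 0 ≤ pairQ n (g i) y) → 0 ≤ pairQ n z y := by
  suffices h : ∀ k : ℕ, ∀ y, (∀ i, 0 ≤ pairQ n (g i) y) →
      s ≤ (zset n s g y).card + k → 0 ≤ pairQ n z y by
    intro y hy
    exact h s y hy (Nat.le_add_left s _)
  intro k
  induction k with
  | zero =>
    intro y hy hcard
    have hle : (zset n s g y).card ≤ s := by
      simpa using Finset.card_le_univ (zset n s g y)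
    have hcards : (zset n s g y).card = Fintype.card (Fin s) := by
      simp only [Fintype.card_fin]; omega
    have huniv : zset n s g y = Finset.univ := Finset.eq_univ_of_card _ hcards
    have hall : ∀ i, pairQ n (g i) y = 0 := fun i =>
      (mem_zset n s g y i).mp (huniv ▸ Finset.mem_univ i)
    have : y = 0 := hpt' y hy (fun i => by rw [pairQ_neg_right, hall i]; exact le_rfl)
    rw [this, pairQ_zero_right]
  | succ k IH =>
    intro y hy hcard
    by_contra hneg
    push_neg at hneg
    have hy0 : y ≠ 0 := by
      rintro rfl
      rw [pairQ_zero_right] at hneg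
      exact absurd hneg (lt_irrefl 0)
    -- the key step: from an element of the cone with strictly more zero
    -- constraints than `y` which still pairs negatively with `z`, we get a
    -- contradiction with the induction hypothesis.
    have hstep : ∀ w, (∀ i, 0 ≤ pairQ n (g i) w) →
        (∀ i, pairQ n (g i) y = 0 → pairQ n (g i) w = 0) →
        (∃ i₁, pairQ n (g i₁) w = 0 ∧ pairQ n (g i₁) y ≠ 0) →
        0 ≤ pairQ n z w := by
      intro w hw hZw ⟨i₁, hi₁w, hi₁y⟩
      apply IH w hw
      have hsubset : insert i₁ (zset n s g y) ⊆ zset n s g w := by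
        intro j hj
        rcases Finset.mem_insert.mp hj with rfl | hj'
        · exact (mem_zset n s g w j).mpr hi₁w
        · exact (mem_zset n s g w j).mpr (hZw j ((mem_zset n s g y j).mp hj'))
      have hcard2 := Finset.card_le_card hsubset
      rw [Finset.card_insert_of_notMem (by
        rw [mem_zset]; exact hi₁y)] at hcard2
      omega
    have hsub : ∀ α : Fin n → ℚ, (∀ i, 0 ≤ pairQ n (g i) α) →
        (∀ i, pairQ n (g i) y = 0 → pairQ n (g i) α = 0) →
        α ∉ rayOf n y → pairQ n z α < 0 → False := by
      intro α hα hZα hαray hzα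
      have hαne : α ≠ 0 := by
        rintro rfl
        exact hαray ⟨0, le_rfl, by simp⟩
      have hIplus : ∃ i, 0 < pairQ n (g i) α := by
        by_contra hno
        push_neg at hno
        refine hαne (hpt' α hα fun i => ?_)
        rw [pairQ_neg_right]
        have := hno i
        linarith
      set Ip := Finset.univ.filter (fun i => 0 < pairQ n (g i) α) with hIp
      have hIpne : Ip.Nonempty := by
        obtain ⟨i, hi⟩ := hIplus
        exact ⟨i, by simp [hIp, hi]⟩
      obtain ⟨i₀, hi₀, hmin⟩ := Finset.exists_min_image Ip
        (fun i => pairQ n (g i) y / pairQ n (g i) α) hIpne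
      have hi₀pos : 0 < pairQ n (g i₀) α := by
        simpa [hIp] using hi₀
      have hi₀y : 0 < pairQ n (g i₀) y := by
        rcases (hy i₀).lt_or_eq with h | h
        · exact h
        · exact absurd (hZα i₀ h.symm) (ne_of_gt hi₀pos)
      set t := pairQ n (g i₀) y / pairQ n (g i₀) α with htdef
      have htpos : 0 < t := div_pos hi₀y hi₀pos
      set y'' := y - t • α with hy''def
      have hy''mem : ∀ i, 0 ≤ pairQ n (g i) y'' := by
        intro i
        rw [hy''def, pairQ_sub_right, pairQ_smul_right]
        by_cases hcase : 0 < pairQ n (g i) α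
        · have hle : t ≤ pairQ n (g i) y / pairQ n (g i) α :=
            hmin i (by simp [hIp, hcase])
          rw [sub_nonneg]
          calc t * pairQ n (g i) α
              ≤ (pairQ n (g i) y / pairQ n (g i) α) * pairQ n (g i) α :=
                mul_le_mul_of_nonneg_right hle hcase.le
            _ = pairQ n (g i) y := div_mul_cancel₀ _ (ne_of_gt hcase)
        · push_neg at hcase
          have h1 : t * pairQ n (g i) α ≤ 0 :=
            mul_nonpos_of_nonneg_of_nonpos htpos.le hcase
          have := hy i
          linarith
      have hZy'' : ∀ i, pairQ n (g i) y = 0 → pairQ n (g i) y'' = 0 := by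
        intro i hi
        rw [hy''def, pairQ_sub_right, pairQ_smul_right, hi, hZα i hi]
        ring
      have hi₀y'' : pairQ n (g i₀) y'' = 0 := by
        rw [hy''def, pairQ_sub_right, pairQ_smul_right, htdef,
          div_mul_cancel₀ _ (ne_of_gt hi₀pos)]
        ring
      have hzy'' : 0 ≤ pairQ n z y'' :=
        hstep y'' hy''mem hZy'' ⟨i₀, hi₀y'', ne_of_gt hi₀y⟩
      have hy''ne : y'' ≠ 0 := by
        intro h0
        apply hαray
        have hyt : y = t • α := by
          have := hy''def ▸ h0
          rwa [sub_eq_zero] at this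
        exact ⟨t⁻¹, (inv_nonneg).mpr htpos.le, by
          rw [hyt, smul_smul, inv_mul_cancel₀ (ne_of_gt htpos), one_smul]⟩
      have hJplus : ∃ i, 0 < pairQ n (g i) y'' := by
        by_contra hno
        push_neg at hno
        refine hy''ne (hpt' y'' hy''mem fun i => ?_)
        rw [pairQ_neg_right]
        have := hno i
        linarith
      set Jp := Finset.univ.filter (fun i => 0 < pairQ n (g i) y'') with hJp
      have hJpne : Jp.Nonempty := by
        obtain ⟨i, hi⟩ := hJplus
        exact ⟨i, by simp [hJp, hi]⟩
      obtain ⟨i₁, hi₁, hmin'⟩ := Finset.exists_min_image Jp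
        (fun i => pairQ n (g i) α / pairQ n (g i) y'') hJpne
      have hi₁pos : 0 < pairQ n (g i₁) y'' := by
        simpa [hJp] using hi₁
      set s' := pairQ n (g i₁) α / pairQ n (g i₁) y'' with hs'def
      have hs'nn : 0 ≤ s' := div_nonneg (hα i₁) hi₁pos.le
      set ahat := α - s' • y'' with hahat
      have hahatmem : ∀ i, 0 ≤ pairQ n (g i) ahat := by
        intro i
        rw [hahat, pairQ_sub_right, pairQ_smul_right]
        by_cases hcase : 0 < pairQ n (g i) y''
        · have hle : s' ≤ pairQ n (g i) α / pairQ n (g i) y'' :=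
            hmin' i (by simp [hJp, hcase])
          rw [sub_nonneg]
          calc s' * pairQ n (g i) y''
              ≤ (pairQ n (g i) α / pairQ n (g i) y'') * pairQ n (g i) y'' :=
                mul_le_mul_of_nonneg_right hle hcase.le
            _ = pairQ n (g i) α := div_mul_cancel₀ _ (ne_of_gt hcase)
        · push_neg at hcase
          have h1 : s' * pairQ n (g i) y'' ≤ 0 :=
            mul_nonpos_of_nonneg_of_nonpos hs'nn hcase
          have := hα i
          linarith
      have hZahat : ∀ i, pairQ n (g i) y = 0 → pairQ n (g i) ahat = 0 := by
        intro i hi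
        rw [hahat, pairQ_sub_right, pairQ_smul_right, hZα i hi, hZy'' i hi]
        ring
      have hi₁ahat : pairQ n (g i₁) ahat = 0 := by
        rw [hahat, pairQ_sub_right, pairQ_smul_right, hs'def,
          div_mul_cancel₀ _ (ne_of_gt hi₁pos)]
        ring
      have hi₁ynot : pairQ n (g i₁) y ≠ 0 := by
        intro hi
        exact absurd (hZy'' i₁ hi) (ne_of_gt hi₁pos)
      have hzahat : 0 ≤ pairQ n z ahat :=
        hstep ahat hahatmem hZahat ⟨i₁, hi₁ahat, hi₁ynot⟩
      have hfin : pairQ n z ahat < 0 := by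
        rw [hahat, pairQ_sub_right, pairQ_smul_right]
        have : 0 ≤ s' * pairQ n z y'' := mul_nonneg hs'nn hzy''
        linarith
      linarith
    -- y is not an extremal generator
    have hnotext : ¬ IsExtremalGen n {y' | ∀ i, 0 ≤ pairQ n (g i) y'} y := by
      intro hext
      exact absurd (hz y hext) (not_le.mpr hneg)
    have hyS : y ∈ {y' | ∀ i, 0 ≤ pairQ n (g i) y'} := hy
    obtain ⟨A, hA, B, hB, hABray, hnotboth⟩ :
        ∃ A ∈ {y' | ∀ i, 0 ≤ pairQ n (g i) y'},
          ∃ B ∈ {y' | ∀ i, 0 ≤ pairQ n (g i) y'},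
          A + B ∈ rayOf n y ∧ ¬(A ∈ rayOf n y ∧ B ∈ rayOf n y) := by
      by_contra hc
      push_neg at hc
      exact hnotext ⟨hy0, hyS, fun A hA B hB hsum => hc A hA B hB hsum⟩
    obtain ⟨lam, hlam0, hlameq⟩ := hABray
    rcases hlam0.lt_or_eq with hlam | hlam
    · -- lam > 0
      set α := lam⁻¹ • A with hαdef
      set β := lam⁻¹ • B with hβdef
      have hαmem : ∀ i, 0 ≤ pairQ n (g i) α := by
        intro i; rw [hαdef, pairQ_smul_right]
        exact mul_nonneg (inv_nonneg.mpr hlam.le) (hA i)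
      have hβmem : ∀ i, 0 ≤ pairQ n (g i) β := by
        intro i; rw [hβdef, pairQ_smul_right]
        exact mul_nonneg (inv_nonneg.mpr hlam.le) (hB i)
      have hsum : α + β = y := by
        rw [hαdef, hβdef, ← smul_add, hlameq, smul_smul,
          inv_mul_cancel₀ (ne_of_gt hlam), one_smul]
      have hZα : ∀ i, pairQ n (g i) y = 0 → pairQ n (g i) α = 0 := by
        intro i hi
        have := pairQ_add_right n (g i) α β
        rw [hsum, hi] at this
        have h1 := hαmem i; have h2 := hβmem i
        linarith
      have hZβ : ∀ i, pairQ n (g i) y = 0 → pairQ n (g i) β = 0 := by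
        intro i hi
        have := pairQ_add_right n (g i) α β
        rw [hsum, hi] at this
        have h1 := hαmem i; have h2 := hβmem i
        linarith
      have haux : ∀ γ δ : Fin n → ℚ, (∀ i, 0 ≤ pairQ n (g i) δ) → γ + δ = y →
          γ ∈ rayOf n y → δ ∈ rayOf n y := by
        intro γ δ hδ hγδ ⟨c, hc0, hcγ⟩
        have hδy : δ = (1 - c) • y := by
          have : δ = y - γ := by rw [← hγδ]; abel
          rw [this, hcγ, sub_smul, one_smul]
        by_cases hc1 : c ≤ 1
        · exact ⟨1 - c, by linarith, hδy⟩
        · push_neg at hc1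
          exfalso
          have hδ0 : δ = 0 := by
            apply hpt' δ hδ
            intro i
            rw [pairQ_neg_right, hδy, pairQ_smul_right]
            have := hy i
            nlinarith
          rw [hδ0] at hδy
          have : y = 0 := by
            have h1c : (1 : ℚ) - c ≠ 0 := by linarith
            rcases smul_eq_zero.mp hδy.symm with h | h
            · exact absurd h h1c
            · exact h
          exact hy0 this
      have hnotrayα : α ∉ rayOf n y := by
        intro hray
        have hβray := haux α β hβmem hsum hray
        apply hnotboth
        constructor
        · obtain ⟨c, hc0, hcα⟩ := hray
          exact ⟨lam * c, mul_nonneg hlam.le hc0, by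
            have : A = lam • α := by
              rw [hαdef, smul_smul, mul_inv_cancel₀ (ne_of_gt hlam), one_smul]
            rw [this, hcα, smul_smul]⟩
        · obtain ⟨c, hc0, hcβ⟩ := hβray
          exact ⟨lam * c, mul_nonneg hlam.le hc0, by
            have : B = lam • β := by
              rw [hβdef, smul_smul, mul_inv_cancel₀ (ne_of_gt hlam), one_smul]
            rw [this, hcβ, smul_smul]⟩
      have hnotrayβ : β ∉ rayOf n y := by
        intro hray
        have hαray := haux β α hαmem (by rw [add_comm]; exact hsum) hray
        exact hnotrayα hαray
      have hsumz : pairQ n z α + pairQ n z β = pairQ n z y := by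
        rw [← pairQ_add_right, hsum]
      rcases lt_or_ge (pairQ n z α) 0 with hneg1 | hpos1
      · exact hsub α hαmem hZα hnotrayα hneg1
      · have hneg2 : pairQ n z β < 0 := by linarith
        exact hsub β hβmem hZβ hnotrayβ hneg2
    · -- lam = 0 : A + B = 0
      rw [← hlam, zero_smul] at hlameq
      have hBA : B = -A := eq_neg_of_add_eq_zero_right hlameq
      exact hnotboth (by
        have hA0 : A = 0 := hpt' A hA (by rw [← hBA]; exact hB)
        have hB0 : B = 0 := by rw [hBA, hA0]; simp
        exact ⟨⟨0, le_rfl, by rw [hA0, zero_smul]⟩, ⟨0, le_rfl, by rw [hB0, zero_smul]⟩⟩)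

end ToricML

namespace ToricML

/-! ### Basic facts about `coneOf`, `sigma`, `rayOf` -/

lemma toQ_zero (n : ℕ) : toQ n (0 : Fin n → ℤ) = 0 := by
  funext i; simp [toQ]

lemma toQ_neg (n : ℕ) (a : Fin n → ℤ) : toQ n (-a) = -toQ n a := by
  funext i; simp [toQ]

lemma toQ_sub_zsmul (n : ℕ) (a b : Fin n → ℤ) (d : ℤ) :
    toQ n (a - d • b) = toQ n a - (d : ℚ) • toQ n b := by
  funext i
  simp only [toQ, Pi.sub_apply, Pi.smul_apply, smul_eq_mul]
  push_cast
  ring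

lemma toQ_mem_coneOf (n : ℕ) (P : AddSubmonoid (Fin n → ℤ)) {p : Fin n → ℤ}
    (hp : p ∈ P) : toQ n p ∈ coneOf n P :=
  ⟨1, zero_le_one, p, hp, (one_smul _ _).symm⟩

lemma coneOf_zero_mem (n : ℕ) (P : AddSubmonoid (Fin n → ℤ)) :
    (0 : Fin n → ℚ) ∈ coneOf n P :=
  ⟨0, le_rfl, 0, P.zero_mem, by simp⟩

lemma coneOf_smul_mem (n : ℕ) (P : AddSubmonoid (Fin n → ℤ)) {x : Fin n → ℚ}
    {e : ℚ} (he : 0 ≤ e) (hx : x ∈ coneOf n P) : e • x ∈ coneOf n P := by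
  obtain ⟨c, hc, p, hp, rfl⟩ := hx
  exact ⟨e * c, mul_nonneg he hc, p, hp, smul_smul e c _⟩

lemma coneOf_add_mem (n : ℕ) (P : AddSubmonoid (Fin n → ℤ)) {x y : Fin n → ℚ}
    (hx : x ∈ coneOf n P) (hy : y ∈ coneOf n P) : x + y ∈ coneOf n P := by
  obtain ⟨c, hc, p, hp, rfl⟩ := hx
  obtain ⟨d, hd, q, hq, rfl⟩ := hy
  set N : ℕ := c.den * d.den with hN
  have hNpos : 0 < (N : ℚ) := by
    have := c.pos
    have := d.pos
    positivity
  set a : ℕ := (c.num * (d.den : ℤ)).toNat with hadef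
  set b : ℕ := (d.num * (c.den : ℤ)).toNat with hbdef
  have hdenc : ((c.den : ℚ)) ≠ 0 := by
    have := c.pos; positivity
  have hdend : ((d.den : ℚ)) ≠ 0 := by
    have := d.pos; positivity
  have hnumc : (c.num : ℚ) = c * c.den := (div_eq_iff hdenc).mp (Rat.num_div_den c)
  have hnumd : (d.num : ℚ) = d * d.den := (div_eq_iff hdend).mp (Rat.num_div_den d)
  have hca : ((a : ℤ) : ℚ) = c * N := by
    have h1 : (0:ℤ) ≤ c.num * d.den := by
      have := Rat.num_nonneg.mpr hc
      positivity
    rw [hadef, Int.toNat_of_nonneg h1, hN]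
    push_cast
    rw [hnumc]
    ring
  have hdb : ((b : ℤ) : ℚ) = d * N := by
    have h1 : (0:ℤ) ≤ d.num * c.den := by
      have := Rat.num_nonneg.mpr hd
      positivity
    rw [hbdef, Int.toNat_of_nonneg h1, hN]
    push_cast
    rw [hnumd]
    ring
  refine ⟨(N : ℚ)⁻¹, by positivity, a • p + b • q,
    P.add_mem (AddSubmonoid.nsmul_mem P hp a) (AddSubmonoid.nsmul_mem P hq b), ?_⟩
  rw [toQ_add, toQ_nsmul, toQ_nsmul, smul_add, smul_smul, smul_smul]
  have hNne : (N : ℚ) ≠ 0 := ne_of_gt hNpos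
  have h1 : (N : ℚ)⁻¹ * (a : ℚ) = c := by
    have : ((a : ℤ) : ℚ) = (a : ℚ) := by push_cast; ring
    rw [← this, hca]
    field_simp
  have h2 : (N : ℚ)⁻¹ * (b : ℚ) = d := by
    have : ((b : ℤ) : ℚ) = (b : ℚ) := by push_cast; ring
    rw [← this, hdb]
    field_simp
  rw [h1, h2]

lemma coneFin_subset_coneOf (n : ℕ) (P : AddSubmonoid (Fin n → ℤ)) (s : ℕ)
    (gz : Fin s → (Fin n → ℤ)) (hgz : ∀ i, gz i ∈ P) :
    coneFin n s (fun i => toQ n (gz i)) ⊆ coneOf n P := by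
  rintro x ⟨c, hc, rfl⟩
  have : ∀ t : Finset (Fin s), (∑ i ∈ t, c i • toQ n (gz i)) ∈ coneOf n P := by
    intro t
    induction t using Finset.induction_on with
    | empty => simpa using coneOf_zero_mem n P
    | insert _ _ hnot ih =>
      rw [Finset.sum_insert hnot]
      exact coneOf_add_mem n P
        (coneOf_smul_mem n P (hc _) (toQ_mem_coneOf n P (hgz _))) ih
  exact this Finset.univ

lemma sigma_smul_mem (n : ℕ) (P : AddSubmonoid (Fin n → ℤ)) {y : Fin n → ℚ}
    {e : ℚ} (he : 0 ≤ e) (hy : y ∈ sigma n P) : e • y ∈ sigma n P := by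
  intro w hw
  rw [pairQ_smul_right]
  exact mul_nonneg he (hy w hw)

lemma rayOf_smul_pos (n : ℕ) (w : Fin n → ℚ) (c : ℚ) (hc : 0 < c) :
    rayOf n (c • w) = rayOf n w := by
  ext x
  constructor
  · rintro ⟨d, hd, rfl⟩
    exact ⟨d * c, mul_nonneg hd hc.le, smul_smul d c w⟩
  · rintro ⟨d, hd, rfl⟩
    exact ⟨d / c, div_nonneg hd hc.le, by
      rw [smul_smul, div_mul_cancel₀ _ (ne_of_gt hc)]⟩

lemma isExtremalGen_smul (n : ℕ) (C : Set (Fin n → ℚ))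
    (hCs : ∀ e : ℚ, 0 ≤ e → ∀ x ∈ C, e • x ∈ C) (w : Fin n → ℚ) (c : ℚ)
    (hc : 0 < c) (hw : IsExtremalGen n C w) : IsExtremalGen n C (c • w) := by
  refine ⟨?_, hCs c hc.le w hw.2.1, ?_⟩
  · intro h
    rcases smul_eq_zero.mp h with h | h
    · exact absurd h (ne_of_gt hc)
    · exact hw.1 h
  · intro x hx y hy hxy
    rw [rayOf_smul_pos n w c hc] at hxy ⊢
    exact hw.2.2 x hx y hy hxy

/-- Every extremal generator of a cone closed under scaling is a positive
multiple of a primitive integral extremal generator. -/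
lemma exists_primitive_scale (n : ℕ) (C : Set (Fin n → ℚ))
    (hCs : ∀ e : ℚ, 0 ≤ e → ∀ x ∈ C, e • x ∈ C) (w : Fin n → ℚ)
    (hw : IsExtremalGen n C w) :
    ∃ (uz : Fin n → ℤ) (c : ℚ), 0 < c ∧ w = c • toQ n uz ∧ IsPrimitive n uz ∧
      IsExtremalGen n C (toQ n uz) := by
  classical
  set N : ℕ := ∏ j, (w j).den with hNdef
  have hNpos : 0 < N := Finset.prod_pos (fun j _ => (w j).pos)
  set z : Fin n → ℤ := fun i => (w i).num * ((N : ℤ) / ((w i).den : ℤ)) with hzdef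
  have htoQz : toQ n z = (N : ℚ) • w := by
    funext i
    have hdvd : ((w i).den : ℤ) ∣ (N : ℤ) := by
      exact_mod_cast Int.natCast_dvd_natCast.mpr
        (Finset.dvd_prod_of_mem (fun j => (w j).den) (Finset.mem_univ i))
    have hmul : ((N : ℤ) / ((w i).den : ℤ)) * ((w i).den : ℤ) = (N : ℤ) :=
      Int.ediv_mul_cancel hdvd
    have hdenne : (((w i).den : ℕ) : ℚ) ≠ 0 := by
      have := (w i).pos; positivity
    have hQ : ((((N : ℤ) / ((w i).den : ℤ)) : ℤ) : ℚ) * (((w i).den : ℕ) : ℚ)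
        = ((N : ℕ) : ℚ) := by exact_mod_cast congrArg (fun t : ℤ => (t : ℚ)) hmul
    have hX : ((((N : ℤ) / ((w i).den : ℤ)) : ℤ) : ℚ)
        = ((N : ℕ) : ℚ) / (((w i).den : ℕ) : ℚ) := by
      rw [eq_div_iff hdenne]; exact hQ
    have hnum : ((w i).num : ℚ) = w i * (((w i).den : ℕ) : ℚ) := by
      have := (div_eq_iff hdenne).mp (Rat.num_div_den (w i))
      linarith
    show ((z i : ℤ) : ℚ) = (N : ℚ) * w i
    rw [hzdef]
    show ((((w i).num * ((N : ℤ) / ((w i).den : ℤ))) : ℤ) : ℚ) = (N : ℚ) * w i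
    rw [Int.cast_mul, hX, hnum]
    field_simp
  have hzne : z ≠ 0 := by
    intro h0
    apply hw.1
    have : toQ n z = 0 := by rw [h0, toQ_zero]
    rw [htoQz] at this
    rcases smul_eq_zero.mp this with h | h
    · exact absurd h (by positivity)
    · exact h
  set G : ℤ := Finset.univ.gcd z with hGdef
  have hGnn : 0 ≤ G := Int.nonneg_of_normalize_eq_self (Finset.normalize_gcd)
  have hGne : G ≠ 0 := by
    intro h0
    apply hzne
    funext i
    exact Finset.gcd_eq_zero_iff.mp h0 i (Finset.mem_univ i)
  have hGpos : 0 < G := lt_of_le_of_ne hGnn (Ne.symm hGne)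
  set uz : Fin n → ℤ := fun i => z i / G with huzdef
  have htoQuz : toQ n uz = ((G : ℚ))⁻¹ • toQ n z := by
    funext i
    have hdvd : G ∣ z i := Finset.gcd_dvd (Finset.mem_univ i)
    have hmul : (z i / G) * G = z i := Int.ediv_mul_cancel hdvd
    have hGQne : (G : ℚ) ≠ 0 := by exact_mod_cast hGne
    have hQ : ((z i / G : ℤ) : ℚ) * (G : ℚ) = ((z i : ℤ) : ℚ) := by
      exact_mod_cast congrArg (fun t : ℤ => (t : ℚ)) hmul
    show ((uz i : ℤ) : ℚ) = (G : ℚ)⁻¹ * ((z i : ℤ) : ℚ)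
    rw [huzdef]
    show ((z i / G : ℤ) : ℚ) = (G : ℚ)⁻¹ * ((z i : ℤ) : ℚ)
    rw [inv_mul_eq_div, eq_div_iff hGQne]
    exact hQ
  have hweq : w = ((G : ℚ) / (N : ℚ)) • toQ n uz := by
    rw [htoQuz, smul_smul, htoQz, smul_smul]
    have hGQne : (G : ℚ) ≠ 0 := by exact_mod_cast hGne
    have hNQne : (N : ℚ) ≠ 0 := by positivity
    rw [show (G : ℚ) / (N : ℚ) * (G : ℚ)⁻¹ * (N : ℚ) = 1 by field_simp, one_smul]
  have hcpos : 0 < (G : ℚ) / (N : ℚ) := by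
    apply div_pos
    · exact_mod_cast hGpos
    · exact_mod_cast hNpos
  have hprim : IsPrimitive n uz := by
    obtain ⟨i, hi⟩ : ∃ i, z i ≠ 0 := by
      by_contra h
      push_neg at h
      exact hzne (funext h)
    exact Finset.gcd_div_eq_one (Finset.mem_univ i) hi
  have hext : IsExtremalGen n C (toQ n uz) := by
    have : toQ n uz = ((N : ℚ) / (G : ℚ)) • w := by
      rw [hweq, smul_smul]
      have hGQne : (G : ℚ) ≠ 0 := by exact_mod_cast hGne
      have hNQne : (N : ℚ) ≠ 0 := by positivity
      rw [show (N : ℚ) / (G : ℚ) * ((G : ℚ) / (N : ℚ)) = 1 by field_simp, one_smul]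
    rw [this]
    exact isExtremalGen_smul n C hCs w _ (by positivity) hw
  exact ⟨uz, (G : ℚ) / (N : ℚ), hcpos, hweq, hprim, hext⟩

end ToricML

namespace ToricML

lemma pairQ_single_one (n : ℕ) (i : Fin n) (y : Fin n → ℚ) :
    pairQ n (toQ n (Pi.single i 1)) y = y i := by
  rw [pairQ]
  rw [Finset.sum_eq_single i]
  · simp [toQ]
  · intro j _ hj
    simp [toQ, Pi.single_apply, hj]
  · intro h
    exact absurd (Finset.mem_univ i) h

lemma sigma_eq_gens (n : ℕ) (P : AddSubmonoid (Fin n → ℤ)) (s : ℕ)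
    (gz : Fin s → (Fin n → ℤ)) (hgz : ∀ i, gz i ∈ P)
    (hgen2 : ∀ p ∈ P, p ∈ AddSubmonoid.closure (Set.range gz)) :
    {y : Fin n → ℚ | ∀ i, 0 ≤ pairQ n (toQ n (gz i)) y} = sigma n P := by
  ext y
  constructor
  · intro hy w hw
    obtain ⟨c, hc, p, hp, rfl⟩ := hw
    rw [pairQ_smul_left]
    apply mul_nonneg hc
    have hind : ∀ q ∈ AddSubmonoid.closure (Set.range gz),
        0 ≤ pairQ n (toQ n q) y := by
      intro q hq
      induction hq using AddSubmonoid.closure_induction with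
      | mem q hq =>
        obtain ⟨i, rfl⟩ := hq
        exact hy i
      | zero => rw [toQ_zero, pairQ_zero_left]
      | add q1 q2 _ _ h1 h2 =>
        rw [toQ_add, pairQ_add_left]
        exact add_nonneg h1 h2
    exact hind p (hgen2 p hp)
  · intro hy i
    exact hy (toQ n (gz i)) (toQ_mem_coneOf n P (hgz i))

lemma sigma_pointed (n : ℕ) (P : AddSubmonoid (Fin n → ℤ))
    (hgen : AddSubgroup.closure (P : Set (Fin n → ℤ)) = ⊤)
    (y : Fin n → ℚ) (hy : y ∈ sigma n P) (hy' : -y ∈ sigma n P) : y = 0 := by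
  have hzero : ∀ p ∈ P, pairQ n (toQ n p) y = 0 := by
    intro p hp
    have h1 := hy (toQ n p) (toQ_mem_coneOf n P hp)
    have h2 := hy' (toQ n p) (toQ_mem_coneOf n P hp)
    rw [pairQ_neg_right] at h2
    linarith
  set Gsub : AddSubgroup (Fin n → ℤ) :=
    { carrier := {zz | pairQ n (toQ n zz) y = 0}
      zero_mem' := by simp [toQ_zero, pairQ_zero_left]
      add_mem' := by
        intro a b ha hb
        simp only [Set.mem_setOf_eq] at ha hb ⊢
        rw [toQ_add, pairQ_add_left, ha, hb, add_zero]
      neg_mem' := by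
        intro a ha
        simp only [Set.mem_setOf_eq] at ha ⊢
        rw [toQ_neg, pairQ_neg_left, ha, neg_zero] } with hGsub
  have hle : AddSubgroup.closure (P : Set (Fin n → ℤ)) ≤ Gsub :=
    (AddSubgroup.closure_le Gsub).mpr (fun p hp => hzero p hp)
  rw [hgen] at hle
  funext i
  have := hle (AddSubgroup.mem_top (Pi.single i 1))
  have h2 : pairQ n (toQ n (Pi.single i 1)) y = 0 := this
  rw [pairQ_single_one] at h2
  exact h2

lemma bidual_mem (n : ℕ) (P : AddSubmonoid (Fin n → ℤ)) (s : ℕ)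
    (gz : Fin s → (Fin n → ℤ)) (hgz : ∀ i, gz i ∈ P)
    (hgen2 : ∀ p ∈ P, p ∈ AddSubmonoid.closure (Set.range gz))
    (x : Fin n → ℚ) (hx : ∀ y ∈ sigma n P, 0 ≤ pairQ n x y) :
    x ∈ coneOf n P := by
  by_contra hxc
  have hx' : x ∉ coneFin n s (fun i => toQ n (gz i)) :=
    fun h => hxc (coneFin_subset_coneOf n P s gz hgz h)
  obtain ⟨y, hy, hxy⟩ := farkas n s (fun i => toQ n (gz i)) x hx'
  have hysig : y ∈ sigma n P := by
    rw [← sigma_eq_gens n P s gz hgz hgen2]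
    exact hy
  linarith [hx y hysig]

theorem key_lemma (n : ℕ) (P : AddSubmonoid (Fin n → ℤ))
    (hfg : P.FG) (hgen : AddSubgroup.closure (P : Set (Fin n → ℤ)) = ⊤)
    (hpt : IsPointed n (coneOf n P)) (u r : Fin n → ℤ)
    (haf : IsAffineFacet n P u) (har : IsAffineRay n P u r) :
    ∀ m ∈ P, m - (pairZ n m u) • r ∈ P := by
  classical
  obtain ⟨S, hS⟩ := hfg
  set s := S.card with hs
  set gz : Fin s → (Fin n → ℤ) := fun i => ((S.equivFin.symm i) : Fin n → ℤ)
    with hgzdef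
  have hgz : ∀ i, gz i ∈ P := by
    intro i
    have h2 := (S.equivFin.symm i).2
    rw [← hS]
    exact AddSubmonoid.subset_closure h2
  have hgen2 : ∀ p ∈ P, p ∈ AddSubmonoid.closure (Set.range gz) := by
    intro p hp
    rw [← hS] at hp
    refine AddSubmonoid.closure_mono ?_ hp
    intro q hq
    exact ⟨S.equivFin ⟨q, hq⟩, by simp [hgzdef]⟩
  have hsig := sigma_eq_gens n P s gz hgz hgen2
  have hpt' : ∀ y : Fin n → ℚ, (∀ i, 0 ≤ pairQ n (toQ n (gz i)) y) →
      (∀ i, 0 ≤ pairQ n (toQ n (gz i)) (-y)) → y = 0 := by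
    intro y h1 h2
    apply sigma_pointed n P hgen y
    · rw [← hsig]; exact h1
    · rw [← hsig]; exact h2
  have htool : ∀ zq : Fin n → ℚ,
      (∀ w, IsExtremalGen n (sigma n P) w → 0 ≤ pairQ n zq w) →
      ∀ y ∈ sigma n P, 0 ≤ pairQ n zq y := by
    intro zq hzq y hy
    refine ext_lemma n s (fun i => toQ n (gz i)) hpt' zq ?_ y ?_
    · intro w hw
      rw [hsig] at hw
      exact hzq w hw
    · rw [← hsig] at hy
      exact hy
  have hbidual := bidual_mem n P s gz hgz hgen2
  obtain ⟨hu, hsat, v, hv0, hvI⟩ := haf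
  have husig : toQ n u ∈ sigma n P := hu.2.2.1
  have hexists : ∃ u0 : Fin n → ℤ, IsExtGenOfSigma n P u0 ∧ u0 ≠ u := by
    by_contra hno
    push_neg at hno
    have huniv : facetInter n P u = Set.univ := by
      apply Set.eq_univ_of_forall
      intro x
      simp only [facetInter, Set.mem_iInter]
      intro u' hu'
      exact absurd (hno u' hu'.1) hu'.2
    rw [hvI] at huniv
    have hmv : -v ∈ rayOf n v := by rw [huniv]; exact Set.mem_univ _
    obtain ⟨c, hc, hcv⟩ := hmv
    have hzero : (c + 1) • v = 0 := by
      rw [add_smul, one_smul, ← hcv]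
      abel
    rcases smul_eq_zero.mp hzero with h | h
    · have : c = -1 := by linarith [h]
      rw [this] at hc
      norm_num at hc
    · exact hv0 h
  obtain ⟨u0, hu0, hu0ne⟩ := hexists
  have hvmem_fi : v ∈ facetInter n P u := by
    rw [hvI]
    exact ⟨1, zero_le_one, (one_smul _ _).symm⟩
  simp only [facetInter, Set.mem_iInter] at hvmem_fi
  have hvfacets : ∀ u' : Fin n → ℤ, IsExtGenOfSigma n P u' → u' ≠ u →
      pairQ n v (toQ n u') = 0 := by
    intro u' h1 h2
    exact (hvmem_fi u' ⟨h1, h2⟩).2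
  have hvcone : v ∈ coneOf n P := (hvmem_fi u0 ⟨hu0, hu0ne⟩).1
  have hvu_nn : 0 ≤ pairQ n v (toQ n u) := husig v hvcone
  have hscale : ∀ w, IsExtremalGen n (sigma n P) w →
      ∃ (uz : Fin n → ℤ) (c : ℚ), 0 < c ∧ w = c • toQ n uz ∧
        IsExtGenOfSigma n P uz := by
    intro w hw
    obtain ⟨uz, c, hc, hwc, hprim, hext⟩ := exists_primitive_scale n (sigma n P)
      (fun e he x hx => sigma_smul_mem n P he hx) w hw
    exact ⟨uz, c, hc, hwc, hprim, hext⟩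
  have hvu_pos : 0 < pairQ n v (toQ n u) := by
    rcases hvu_nn.lt_or_eq with h | h
    · exact h
    · exfalso
      have hneg : ∀ y ∈ sigma n P, 0 ≤ pairQ n (-v) y := by
        apply htool
        intro w hw
        obtain ⟨uz, c, hc, hwc, hgex⟩ := hscale w hw
        rw [hwc, pairQ_smul_right, pairQ_neg_left]
        by_cases hcase : uz = u
        · rw [hcase, ← h]
          simp
        · rw [hvfacets uz hgex hcase]
          simp
      have hmv : -v ∈ coneOf n P := hbidual _ hneg
      exact hv0 (hpt v hvcone hmv)
  have hdecomp : ∀ x ∈ coneOf n P, ∃ (f : Fin n → ℚ) (c : ℚ), f ∈ facet n P u ∧ 0 ≤ c ∧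
      x = f + c • v := by
    intro x hx
    have ht : 0 ≤ pairQ n x (toQ n u) := husig x hx
    set c := pairQ n x (toQ n u) / pairQ n v (toQ n u) with hcdef
    have hc : 0 ≤ c := div_nonneg ht hvu_pos.le
    set f := x - c • v with hfdef
    have hfu : pairQ n f (toQ n u) = 0 := by
      rw [hfdef, pairQ_sub_left, pairQ_smul_left, hcdef,
        div_mul_cancel₀ _ hvu_pos.ne']
      ring
    have hfcone : f ∈ coneOf n P := by
      apply hbidual
      apply htool
      intro w hw
      obtain ⟨uz, cc, hcc, hwc, hgex⟩ := hscale w hw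
      rw [hwc, pairQ_smul_right]
      apply mul_nonneg hcc.le
      by_cases hcase : uz = u
      · rw [hcase, hfu]
      · rw [hfdef, pairQ_sub_left, pairQ_smul_left, hvfacets uz hgex hcase]
        have h2 : 0 ≤ pairQ n x (toQ n uz) := hgex.2.2.1 x hx
        linarith
    exact ⟨f, c, ⟨hfcone, hfu⟩, hc, by rw [hfdef]; abel⟩
  have hrP : r ∈ P := har.2.2.2.1
  have hrext : IsExtremalGen n (coneOf n P) (toQ n r) := har.2.1
  have hru : pairZ n r u = 1 := har.2.2.2.2.1
  obtain ⟨fr, cr, hfrF, hcr, hreq⟩ := hdecomp (toQ n r) (toQ_mem_coneOf n P hrP)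
  have hcr_eq : cr * pairQ n v (toQ n u) = 1 := by
    have h1 : pairQ n (toQ n r) (toQ n u) = 1 := by
      rw [pairQ_toQ, hru]; norm_num
    rw [hreq, pairQ_add_left, hfrF.2, pairQ_smul_left] at h1
    linarith
  have hcrpos : 0 < cr := by
    rcases hcr.lt_or_eq with h | h
    · exact h
    · exfalso
      rw [← h] at hcr_eq
      norm_num at hcr_eq
  have hray := (hrext.2.2 fr hfrF.1 (cr • v)
    (coneOf_smul_mem n P hcr hvcone)
    (by rw [← hreq]; exact ⟨1, zero_le_one, (one_smul _ _).symm⟩)).2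
  obtain ⟨c2, hc2, hc2eq⟩ := hray
  have hvρ : v = (c2 / cr) • toQ n r := by
    have h3 : cr⁻¹ • (cr • v) = v := by
      rw [smul_smul, inv_mul_cancel₀ hcrpos.ne', one_smul]
    rw [← h3, hc2eq, smul_smul, inv_mul_eq_div]
  have hρnn : 0 ≤ c2 / cr := div_nonneg hc2 hcrpos.le
  intro m hm
  obtain ⟨fm, cm, hfmF, hcm, hmeq⟩ := hdecomp (toQ n m) (toQ_mem_coneOf n P hm)
  set d := pairZ n m u with hddef
  have hdq : ((d : ℤ) : ℚ) = cm * (c2 / cr) := by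
    have h1 : pairQ n (toQ n m) (toQ n u) = ((d : ℤ) : ℚ) := by
      rw [pairQ_toQ]
    rw [hmeq, pairQ_add_left, hfmF.2, hvρ, pairQ_smul_left, pairQ_smul_left,
      pairQ_toQ, hru] at h1
    push_cast at h1
    linarith
  have hfm_eq : fm = toQ n (m - d • r) := by
    rw [toQ_sub_zsmul]
    have h5 : toQ n m = fm + ((d : ℤ) : ℚ) • toQ n r := by
      rw [hmeq, hvρ, smul_smul, ← hdq]
    rw [h5]
    abel
  exact hsat (m - d • r) (by rw [← hfm_eq]; exact hfmF)

end ToricML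

namespace ToricML

lemma pairZ_add_left (n : ℕ) (a b u : Fin n → ℤ) :
    pairZ n (a + b) u = pairZ n a u + pairZ n b u := by
  simp [pairZ, add_mul, Finset.sum_add_distrib]

lemma pairZ_sub_left (n : ℕ) (a b u : Fin n → ℤ) :
    pairZ n (a - b) u = pairZ n a u - pairZ n b u := by
  simp [pairZ, sub_mul, Finset.sum_sub_distrib]

lemma pairZ_zero_left (n : ℕ) (u : Fin n → ℤ) : pairZ n 0 u = 0 := by
  simp [pairZ]

lemma pairZ_nonneg (n : ℕ) (P : AddSubmonoid (Fin n → ℤ)) (u : Fin n → ℤ)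
    (husig : toQ n u ∈ sigma n P) {m : Fin n → ℤ} (hm : m ∈ P) :
    0 ≤ pairZ n m u := by
  have := husig (toQ n m) (toQ_mem_coneOf n P hm)
  rw [pairQ_toQ] at this
  exact_mod_cast this

/-- The homogeneous derivation on the ambient Laurent algebra. -/
noncomputable def Dmap (K : Type) [Field K] (n : ℕ) (u r : Fin n → ℤ) :
    Laurent K n →ₗ[K] Laurent K n :=
  (Finsupp.lsum K (fun m => LinearMap.toSpanSingleton K (Laurent K n)
    (AddMonoidAlgebra.single (m - r) ((pairZ n m u : ℤ) : K)))) ∘ₗ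
    (AddMonoidAlgebra.coeffLinearEquiv K).toLinearMap

lemma Dmap_single (K : Type) [Field K] (n : ℕ) (u r : Fin n → ℤ)
    (m : Fin n → ℤ) (c : K) :
    Dmap K n u r (AddMonoidAlgebra.single m c)
      = AddMonoidAlgebra.single (m - r) (c * ((pairZ n m u : ℤ) : K)) := by
  unfold Dmap
  rw [LinearMap.comp_apply]
  erw [Finsupp.lsum_single, LinearMap.toSpanSingleton_apply,
    AddMonoidAlgebra.smul_single, smul_eq_mul]

lemma Dmap_mul (K : Type) [Field K] (n : ℕ) (u r : Fin n → ℤ)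
    (f g : Laurent K n) :
    Dmap K n u r (f * g) = f * Dmap K n u r g + g * Dmap K n u r f := by
  induction f using AddMonoidAlgebra.induction_linear with
  | zero => simp
  | add f₁ f₂ h1 h2 =>
    rw [add_mul, map_add, h1, h2, map_add]
    ring
  | single a c =>
    induction g using AddMonoidAlgebra.induction_linear with
    | zero => simp
    | add g₁ g₂ h1 h2 =>
      rw [mul_add, map_add, h1, h2, map_add]
      ring
    | single b e =>
      rw [AddMonoidAlgebra.single_mul_single, Dmap_single, Dmap_single,
        Dmap_single, AddMonoidAlgebra.single_mul_single,
        AddMonoidAlgebra.single_mul_single]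
      have hi1 : a + (b - r) = a + b - r := by abel
      have hi2 : b + (a - r) = a + b - r := by abel
      rw [hi1, hi2, ← AddMonoidAlgebra.single_add]
      congr 1
      rw [pairZ_add_left]
      push_cast
      ring

lemma Dmap_mem (K : Type) [Field K] [CharZero K] (n : ℕ)
    (P : AddSubmonoid (Fin n → ℤ)) (u r : Fin n → ℤ)
    (hkey : ∀ m ∈ P, pairZ n m u ≠ 0 → m - r ∈ P)
    {f : Laurent K n} (hf : f ∈ monAlg K n P) :
    Dmap K n u r f ∈ monAlg K n P := by
  intro m' hm'
  unfold Dmap at hm'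
  rw [LinearMap.comp_apply] at hm'
  erw [Finsupp.lsum_apply, AddMonoidAlgebra.coeff_finsuppSum] at hm'
  have := Finsupp.support_sum hm'
  rw [Finset.mem_biUnion] at this
  obtain ⟨a, ha, hma⟩ := this
  rw [LinearMap.toSpanSingleton_apply, AddMonoidAlgebra.smul_single,
    AddMonoidAlgebra.coeff_single] at hma
  have h1 := Finsupp.mem_support_iff.mp hma
  rw [Finsupp.single_apply] at h1
  by_cases heq : a - r = m'
  · rw [if_pos heq] at h1
    have h2 : ((pairZ n a u : ℤ) : K) ≠ 0 := by
      intro h0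
      apply h1
      rw [smul_eq_mul, h0, mul_zero]
    have h3 : pairZ n a u ≠ 0 := fun h0 => h2 (by rw [h0]; norm_num)
    rw [← heq]
    exact hkey a (hf a ha) h3
  · rw [if_neg heq] at h1
    exact absurd rfl h1

/-- The derivation `δ` on `K[P]`. -/
noncomputable def derP (K : Type) [Field K] [CharZero K] (n : ℕ)
    (P : AddSubmonoid (Fin n → ℤ)) (u r : Fin n → ℤ)
    (hkey : ∀ m ∈ P, pairZ n m u ≠ 0 → m - r ∈ P)
    (hr0 : pairZ n 0 u = 0) :
    Derivation K (monAlg K n P) (monAlg K n P) where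
  toLinearMap :=
    { toFun := fun f => ⟨Dmap K n u r (f : Laurent K n),
        Dmap_mem K n P u r hkey f.2⟩
      map_add' := by
        intro a b
        apply Subtype.ext
        simp [map_add]
      map_smul' := by
        intro c a
        apply Subtype.ext
        simp }
  map_one_eq_zero' := by
    apply Subtype.ext
    show Dmap K n u r ((1 : monAlg K n P) : Laurent K n) = 0
    have h1 : ((1 : monAlg K n P) : Laurent K n)
        = AddMonoidAlgebra.single (0 : Fin n → ℤ) (1 : K) := rfl
    rw [h1, Dmap_single, hr0]
    norm_num
  leibniz' := by
    intro a b
    apply Subtype.ext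
    show Dmap K n u r ((a * b : monAlg K n P) : Laurent K n) = _
    have h1 : ((a * b : monAlg K n P) : Laurent K n)
        = (a : Laurent K n) * (b : Laurent K n) := rfl
    rw [h1, Dmap_mul]
    rfl

lemma derP_coe (K : Type) [Field K] [CharZero K] (n : ℕ)
    (P : AddSubmonoid (Fin n → ℤ)) (u r : Fin n → ℤ)
    (hkey : ∀ m ∈ P, pairZ n m u ≠ 0 → m - r ∈ P) (hr0 : pairZ n 0 u = 0)
    (f : monAlg K n P) :
    ((derP K n P u r hkey hr0 f : monAlg K n P) : Laurent K n)
      = Dmap K n u r (f : Laurent K n) := rfl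

lemma derP_pow_coe (K : Type) [Field K] [CharZero K] (n : ℕ)
    (P : AddSubmonoid (Fin n → ℤ)) (u r : Fin n → ℤ)
    (hkey : ∀ m ∈ P, pairZ n m u ≠ 0 → m - r ∈ P) (hr0 : pairZ n 0 u = 0)
    (k : ℕ) (f : monAlg K n P) :
    ((((derP K n P u r hkey hr0).toLinearMap ^ k) f : monAlg K n P) : Laurent K n)
      = ((Dmap K n u r) ^ k) (f : Laurent K n) := by
  induction k generalizing f with
  | zero => rfl
  | succ k ih =>
    rw [pow_succ, pow_succ, Module.End.mul_apply, Module.End.mul_apply, ih]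
    rfl

lemma Dmap_nilpotent (K : Type) [Field K] [CharZero K] (n : ℕ) (u r : Fin n → ℤ)
    (hru : pairZ n r u = 1) :
    ∀ (k : ℕ) (f : Laurent K n),
      (∀ m ∈ f.coeff.support, 0 ≤ pairZ n m u ∧ pairZ n m u < (k : ℤ)) →
      ((Dmap K n u r) ^ k) f = 0 := by
  intro k
  induction k with
  | zero =>
    intro f hf
    have : f.coeff.support = ∅ := by
      by_contra h
      obtain ⟨m, hm⟩ := Finset.nonempty_of_ne_empty h
      have := hf m hm
      omega
    rw [pow_zero, Module.End.one_apply]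
    exact AddMonoidAlgebra.coeff_injective (Finsupp.support_eq_empty.mp this)
  | succ k ih =>
    intro f hf
    rw [pow_succ, Module.End.mul_apply]
    apply ih
    intro m' hm'
    unfold Dmap at hm'
    rw [LinearMap.comp_apply] at hm'
    erw [Finsupp.lsum_apply, AddMonoidAlgebra.coeff_finsuppSum] at hm'
    have := Finsupp.support_sum hm'
    rw [Finset.mem_biUnion] at this
    obtain ⟨a, ha, hma⟩ := this
    rw [LinearMap.toSpanSingleton_apply, AddMonoidAlgebra.smul_single,
      AddMonoidAlgebra.coeff_single] at hma
    have h1 := Finsupp.mem_support_iff.mp hma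
    rw [Finsupp.single_apply] at h1
    by_cases hcase : a - r = m'
    · rw [if_pos hcase] at h1
      have h2 : pairZ n a u ≠ 0 := by
        intro h0
        apply h1
        rw [smul_eq_mul, h0]
        norm_num
      have h3 := hf a ha
      have h4 : pairZ n m' u = pairZ n a u - 1 := by
        rw [← hcase, pairZ_sub_left, hru]
      omega
    · rw [if_neg hcase] at h1
      exact absurd rfl h1

end ToricML


open ToricML in
theorem stmt_12 (K : Type) [Field K] [CharZero K] [IsAlgClosed K]
    (n : ℕ) (hn : 1 ≤ n) (P : AddSubmonoid (Fin n → ℤ))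
    (hfg : P.FG) (hgen : AddSubgroup.closure (P : Set (Fin n → ℤ)) = ⊤)
    (hpt : IsPointed n (coneOf n P)) (u r : Fin n → ℤ)
    (haf : IsAffineFacet n P u) (har : IsAffineRay n P u r) :
    ∃ δ : Derivation K (monAlg K n P) (monAlg K n P),
      IsHomog K n P δ (-r) ∧ IsLND δ ∧
      (∀ (m : Fin n → ℤ) (hm : m ∈ P),
        ((δ (chiP K n P m hm) : monAlg K n P) : Laurent K n)
          = AddMonoidAlgebra.single (m - r) ((pairZ n m u : ℤ) : K)) ∧
      δ (chiP K n P r har.2.2.2.1) = 1 := by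
  have husig : toQ n u ∈ sigma n P := haf.1.2.2.1
  have hru : pairZ n r u = 1 := har.2.2.2.2.1
  have hrP : r ∈ P := har.2.2.2.1
  have hklem := key_lemma n P hfg hgen hpt u r haf har
  have hkey : ∀ m ∈ P, pairZ n m u ≠ 0 → m - r ∈ P := by
    intro m hm hne
    have hd0 : 0 ≤ pairZ n m u := pairZ_nonneg n P u husig hm
    have h2 := hklem m hm
    have htn : (((pairZ n m u - 1).toNat : ℤ)) = pairZ n m u - 1 :=
      Int.toNat_of_nonneg (by omega)
    have heq : m - r = (m - pairZ n m u • r) + (pairZ n m u - 1).toNat • r := by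
      have hns : ((pairZ n m u - 1).toNat) • r = (pairZ n m u - 1) • r := by
        rw [← natCast_zsmul, htn]
      rw [hns, sub_smul, one_smul]
      abel
    rw [heq]
    exact P.add_mem h2 (AddSubmonoid.nsmul_mem P hrP _)
  have hr0 : pairZ n 0 u = 0 := pairZ_zero_left n u
  have hform : ∀ (m : Fin n → ℤ) (hm : m ∈ P),
      ((derP K n P u r hkey hr0 (chiP K n P m hm) : monAlg K n P) : Laurent K n)
        = AddMonoidAlgebra.single (m - r) ((pairZ n m u : ℤ) : K) := by
    intro m hm
    rw [derP_coe]
    have hc : ((chiP K n P m hm : monAlg K n P) : Laurent K n)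
        = AddMonoidAlgebra.single m (1 : K) := rfl
    rw [hc, Dmap_single, one_mul]
  refine ⟨derP K n P u r hkey hr0, ?_, ?_, ?_, ?_⟩
  · -- homogeneity of degree -r
    intro m hm
    exact ⟨((pairZ n m u : ℤ) : K), by rw [hform m hm, sub_eq_add_neg]⟩
  · -- local nilpotency
    intro f
    set B := (f : Laurent K n).coeff.support.sup (fun m => (pairZ n m u).toNat) with hB
    refine ⟨B + 1, ?_⟩
    have hbound : ∀ m ∈ (f : Laurent K n).coeff.support,
        0 ≤ pairZ n m u ∧ pairZ n m u < ((B + 1 : ℕ) : ℤ) := by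
      intro m hm
      have hmP : m ∈ P := f.2 m hm
      have h0 := pairZ_nonneg n P u husig hmP
      have hle : (pairZ n m u).toNat ≤ B := hB ▸ Finset.le_sup (f := fun m => (pairZ n m u).toNat) hm
      constructor
      · exact h0
      · push_cast
        omega
    apply Subtype.ext
    rw [derP_pow_coe K n P u r hkey hr0 (B + 1) f]
    rw [show ((0 : monAlg K n P) : Laurent K n) = 0 from rfl]
    exact Dmap_nilpotent K n u r hru (B + 1) (f : Laurent K n) hbound
  · -- the formula
    exact hform
  · -- slice
    apply Subtype.ext
    rw [hform r hrP, hru]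
    rw [show ((1 : monAlg K n P) : Laurent K n)
      = AddMonoidAlgebra.single (0 : Fin n → ℤ) (1 : K) from rfl]
    rw [sub_self]
    norm_num
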